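/- arXiv:2501.17513 — 5 statements merged into one kernel-verified Lean document; each statement's English description precedes it below -/
import Mathlib

section
/- Let K, d be positive natural numbers, μ ∈ (ℝ^d)^K, w ∈ ℝ_{>0}^K, and let k₀, k₁ ∈ p(μ) be distinct. Then the infimum of D_w(μ, λ) over λ ∈ (ℝ^d)^K satisfying λ_{k₀} ⪯ λ_{k₁} equals (1/2) · (w_{k₀} w_{k₁} / (w_{k₀} + w_{k₁})) · Σ_{j∈[d]} (max{0, μ^j_{k₀} − μ^j_{k₁}})², and this infimum is attained. -/
/-- Componentwise domination on `ℝ^d` (Euclidean space). -/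
def Dominates {d : ℕ} (x y : EuclideanSpace ℝ (Fin d)) : Prop := ∀ j, x j ≤ y j

/-- The Pareto set of `μ`. -/
def paretoSet {K d : ℕ} (μ : Fin K → EuclideanSpace ℝ (Fin d)) : Set (Fin K) :=
  {k | ∀ k', Dominates (μ k) (μ k') → Dominates (μ k') (μ k)}

/-- The `w`-weighted transportation cost `D_w(μ, λ) = Σ_k (w_k/2)‖μ_k − λ_k‖²`. -/
noncomputable def Dw {K d : ℕ} (w : Fin K → ℝ)
    (μ lam : Fin K → EuclideanSpace ℝ (Fin d)) : ℝ :=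
  ∑ k, w k / 2 * ‖μ k - lam k‖ ^ 2

lemma eucl_norm_sq {d : ℕ} (x : EuclideanSpace ℝ (Fin d)) : ‖x‖ ^ 2 = ∑ j, (x j) ^ 2 := by
  rw [EuclideanSpace.norm_eq, Real.sq_sqrt (by positivity)]
  simp [sq_abs]

lemma oneDim (w₀ w₁ x y a b : ℝ) (hw₀ : 0 < w₀) (hw₁ : 0 < w₁) (hab : a ≤ b) :
    1 / 2 * (w₀ * w₁ / (w₀ + w₁)) * (max 0 (x - y)) ^ 2 ≤
      w₀ / 2 * (x - a) ^ 2 + w₁ / 2 * (y - b) ^ 2 := by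
  have hs : (0 : ℝ) < w₀ + w₁ := by linarith
  rcases le_or_gt x y with hxy | hxy
  · rw [max_eq_left (by linarith)]
    have h2 : 1 / 2 * (w₀ * w₁ / (w₀ + w₁)) * (0:ℝ) ^ 2 = 0 := by ring
    rw [h2]
    positivity
  · rw [max_eq_right (by linarith)]
    have h2 : 1 / 2 * (w₀ * w₁ / (w₀ + w₁)) * (x - y) ^ 2
        = (w₀ * w₁ * (x - y) ^ 2) / (w₀ + w₁) / 2 := by ring
    rw [h2, div_le_iff₀ (by norm_num : (0:ℝ) < 2), div_le_iff₀ hs]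
    nlinarith [sq_nonneg (w₀ * (x - a) - w₁ * (b - y)),
      mul_nonneg (le_of_lt (mul_pos hw₀ hw₁))
        (mul_nonneg (sub_nonneg.2 hab) (show (0:ℝ) ≤ 2 * (x - y) + (b - a) by linarith))]

/-- Cost of removing a point from the Pareto set: the minimal transportation
cost over `λ` making `λ_{k₀}` dominated by `λ_{k₁}`, which is attained. -/
theorem removing_cost {K d : ℕ} (hK : 0 < K) (hd : 0 < d)
    (μ : Fin K → EuclideanSpace ℝ (Fin d)) (w : Fin K → ℝ) (hw : ∀ k, 0 < w k)
    (k₀ k₁ : Fin K) (h₀ : k₀ ∈ paretoSet μ) (h₁ : k₁ ∈ paretoSet μ) (hne : k₀ ≠ k₁) :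
    IsLeast {c : ℝ | ∃ lam : Fin K → EuclideanSpace ℝ (Fin d),
        Dominates (lam k₀) (lam k₁) ∧ c = Dw w μ lam}
      (1 / 2 * (w k₀ * w k₁ / (w k₀ + w k₁)) *
        ∑ j, (max 0 (μ k₀ j - μ k₁ j)) ^ 2) := by
  have hw₀ := hw k₀
  have hw₁ := hw k₁
  have hs : (0 : ℝ) < w k₀ + w k₁ := by linarith
  set m : Fin d → ℝ := fun j => (w k₀ * μ k₀ j + w k₁ * μ k₁ j) / (w k₀ + w k₁) with hm
  constructor
  · -- membership: exhibit the optimal lam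
    set lam : Fin K → EuclideanSpace ℝ (Fin d) := fun k =>
      if k = k₀ then WithLp.toLp 2 (fun j => if μ k₀ j ≤ μ k₁ j then μ k₀ j else m j)
      else if k = k₁ then WithLp.toLp 2 (fun j => if μ k₀ j ≤ μ k₁ j then μ k₁ j else m j)
      else μ k with hlam
    refine ⟨lam, ?_, ?_⟩
    · intro j
      simp only [hlam, if_pos rfl, if_neg hne, if_neg hne.symm, if_pos rfl]
      by_cases hj : μ k₀ j ≤ μ k₁ j <;> simp [hj]
    · have hz : ∀ k ∈ Finset.univ, k ∉ ({k₀, k₁} : Finset (Fin K)) →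
          w k / 2 * ‖μ k - lam k‖ ^ 2 = 0 := by
        intro k _ hk
        simp only [Finset.mem_insert, Finset.mem_singleton, not_or] at hk
        simp [hlam, hk.1, hk.2]
      rw [Dw, ← Finset.sum_subset (Finset.subset_univ _) hz,
        Finset.sum_pair hne]
      have h0 : ‖μ k₀ - lam k₀‖ ^ 2 = ∑ j, (μ k₀ j - lam k₀ j) ^ 2 := by
        rw [eucl_norm_sq]; rfl
      have h1 : ‖μ k₁ - lam k₁‖ ^ 2 = ∑ j, (μ k₁ j - lam k₁ j) ^ 2 := by
        rw [eucl_norm_sq]; rfl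
      rw [h0, h1, Finset.mul_sum, Finset.mul_sum, Finset.mul_sum,
        ← Finset.sum_add_distrib]
      have l0 : ∀ j, lam k₀ j = if μ k₀ j ≤ μ k₁ j then μ k₀ j else m j := by
        intro j; simp [hlam]
      have l1 : ∀ j, lam k₁ j = if μ k₀ j ≤ μ k₁ j then μ k₁ j else m j := by
        intro j
        have hne' : k₁ ≠ k₀ := Ne.symm hne
        simp [hlam, hne']
      refine Finset.sum_congr rfl fun j _ => ?_
      rw [l0 j, l1 j]
      by_cases hj : μ k₀ j ≤ μ k₁ j
      · rw [if_pos hj, if_pos hj, max_eq_left (by linarith)]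
        ring
      · rw [if_neg hj, if_neg hj]
        push_neg at hj
        rw [max_eq_right (by linarith), hm]
        field_simp
        ring
  · -- lower bound
    rintro c ⟨lam, hdom, rfl⟩
    have hsub : ∑ k ∈ ({k₀, k₁} : Finset (Fin K)), (w k / 2 * ‖μ k - lam k‖ ^ 2)
        ≤ Dw w μ lam :=
      Finset.sum_le_sum_of_subset_of_nonneg (Finset.subset_univ _)
        (fun k _ _ => mul_nonneg (by linarith [hw k]) (sq_nonneg _))
    refine le_trans ?_ hsub
    rw [Finset.sum_pair hne]
    have h0 : ‖μ k₀ - lam k₀‖ ^ 2 = ∑ j, (μ k₀ j - lam k₀ j) ^ 2 := by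
      rw [eucl_norm_sq]; rfl
    have h1 : ‖μ k₁ - lam k₁‖ ^ 2 = ∑ j, (μ k₁ j - lam k₁ j) ^ 2 := by
      rw [eucl_norm_sq]; rfl
    rw [h0, h1, Finset.mul_sum, Finset.mul_sum, Finset.mul_sum,
      ← Finset.sum_add_distrib]
    exact Finset.sum_le_sum fun j _ =>
      oneDim (w k₀) (w k₁) (μ k₀ j) (μ k₁ j) (lam k₀ j) (lam k₁ j) hw₀ hw₁ (hdom j)
end

section
/- Let K, d be positive natural numbers, μ ∈ (ℝ^d)^K, w ∈ ℝ_{>0}^K, k₀ ∉ p(μ), and fix λ₀ ∈ ℝ^d. Consider all λ ∈ (ℝ^d)^K with λ_{k₀} = λ₀, λ_k = μ_k for every k ∉ p(μ) ∪ {k₀}, and such that for every k ∈ p(μ), ¬(λ₀ ⪯ λ_k). The infimum of D_w(μ, λ) over this set equals g_{k₀}(λ₀) := (w_{k₀}/2)·‖μ_{k₀} − λ₀‖² + Σ_{k ∈ p(μ)} (w_k/2) · min_{j∈[d]} (max{0, μ_k^j − λ₀^j})². -/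
/-- `g_{k₀}(λ₀) = (w_{k₀}/2)‖μ_{k₀} − λ₀‖² +
Σ_{k ∈ p(μ)} (w_k/2)·min_j (max{0, μ_k^j − λ₀^j})²`. -/
noncomputable def gcost {K d : ℕ} (w : Fin K → ℝ) (μ : Fin K → EuclideanSpace ℝ (Fin d))
    (k₀ : Fin K) (lam0 : EuclideanSpace ℝ (Fin d)) : ℝ :=
  w k₀ / 2 * ‖μ k₀ - lam0‖ ^ 2 +
    ∑ k, (paretoSet μ).indicator
      (fun k => w k / 2 * ⨅ j, (max 0 (μ k j - lam0 j)) ^ 2) k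

private lemma euclid_norm_sq {d : ℕ} (x : EuclideanSpace ℝ (Fin d)) :
    ‖x‖ ^ 2 = ∑ i, (x i) ^ 2 := by
  rw [EuclideanSpace.norm_eq, Real.sq_sqrt (by positivity)]
  simp [sq_abs]

/-- Given a target location `λ₀` for the non-Pareto point `k₀`, the infimum of
the transportation cost over `λ` moving `k₀` to `λ₀`, leaving points outside
`p(μ) ∪ {k₀}` in place, and breaking the domination of `λ₀` by every Pareto
point, equals `g_{k₀}(λ₀)`. -/
theorem fixed_target_adding_cost {K d : ℕ} (hK : 0 < K) (hd : 0 < d)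
    (μ : Fin K → EuclideanSpace ℝ (Fin d)) (w : Fin K → ℝ) (hw : ∀ k, 0 < w k)
    (k₀ : Fin K) (hk₀ : k₀ ∉ paretoSet μ) (lam0 : EuclideanSpace ℝ (Fin d)) :
    sInf {c : ℝ | ∃ lam : Fin K → EuclideanSpace ℝ (Fin d),
        lam k₀ = lam0 ∧
        (∀ k, k ∉ paretoSet μ ∪ {k₀} → lam k = μ k) ∧
        (∀ k ∈ paretoSet μ, ¬ Dominates lam0 (lam k)) ∧
        c = Dw w μ lam}
      = gcost w μ k₀ lam0 := by
  classical
  haveI : Nonempty (Fin d) := ⟨⟨0, hd⟩⟩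
  set P := paretoSet μ with hP
  set S := {c : ℝ | ∃ lam : Fin K → EuclideanSpace ℝ (Fin d),
        lam k₀ = lam0 ∧
        (∀ k, k ∉ paretoSet μ ∪ {k₀} → lam k = μ k) ∧
        (∀ k ∈ paretoSet μ, ¬ Dominates lam0 (lam k)) ∧
        c = Dw w μ lam} with hS
  -- choose minimizing coordinates
  have hjex : ∀ k : Fin K, ∃ j : Fin d, ∀ i : Fin d,
      (max 0 (μ k j - lam0 j)) ^ 2 ≤ (max 0 (μ k i - lam0 i)) ^ 2 := by
    intro k
    obtain ⟨j, -, hj⟩ := Finset.exists_min_image Finset.univ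
      (fun i => (max 0 (μ k i - lam0 i)) ^ 2) ⟨⟨0, hd⟩, Finset.mem_univ _⟩
    exact ⟨j, fun i => hj i (Finset.mem_univ i)⟩
  choose j hjmin using hjex
  set m : Fin K → ℝ := fun k => max 0 (μ k (j k) - lam0 (j k)) with hm
  have hm0 : ∀ k, 0 ≤ m k := fun k => le_max_left _ _
  have hiInf : ∀ k, (⨅ i, (max 0 (μ k i - lam0 i)) ^ 2) = (m k) ^ 2 := by
    intro k
    refine le_antisymm (ciInf_le ⟨0, ?_⟩ (j k)) (le_ciInf (hjmin k))
    rintro x ⟨i, rfl⟩; positivity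
  -- termwise form of gcost
  set g : Fin K → ℝ := fun k =>
    (if k = k₀ then w k / 2 * ‖μ k₀ - lam0‖ ^ 2 else 0) +
      Set.indicator P (fun k => w k / 2 * (m k) ^ 2) k with hgdef
  have hg : gcost w μ k₀ lam0 = ∑ k, g k := by
    rw [hgdef]
    rw [Finset.sum_add_distrib]
    unfold gcost
    congr 1
    · rw [Finset.sum_ite_eq' Finset.univ k₀ (fun k => w k / 2 * ‖μ k₀ - lam0‖ ^ 2)]
      simp
    · refine Finset.sum_congr rfl fun k _ => ?_
      by_cases hk : k ∈ P <;> simp [Set.indicator, hk, hiInf k, ← hP]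
  -- lower bound
  have hlb : ∀ c ∈ S, gcost w μ k₀ lam0 ≤ c := by
    rintro c ⟨lam, h0, hfix, hdom, rfl⟩
    rw [hg, Dw]
    refine Finset.sum_le_sum fun k _ => ?_
    by_cases hk0 : k = k₀
    · subst hk0
      have : k ∉ P := hk₀
      simp [hgdef, Set.indicator, this, h0]
    · by_cases hkP : k ∈ P
      · have hnd := hdom k hkP
        obtain ⟨i, hi⟩ : ∃ i, lam k i < lam0 i := by
          by_contra h; push_neg at h; exact hnd fun i => h i
        have h1 : (max 0 (μ k i - lam0 i)) ^ 2 ≤ (μ k i - lam k i) ^ 2 := by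
          rcases le_or_gt (μ k i) (lam0 i) with h | h
          · rw [max_eq_left (by linarith)]
            simpa using sq_nonneg (μ k i - lam k i)
          · rw [max_eq_right (by linarith : (0:ℝ) ≤ μ k i - lam0 i)]
            have := hi
            nlinarith
        have h2 : (μ k i - lam k i) ^ 2 ≤ ‖μ k - lam k‖ ^ 2 := by
          rw [euclid_norm_sq]
          have hterm : (μ k i - lam k i) ^ 2 = ((μ k - lam k) i) ^ 2 := by
            simp [PiLp.sub_apply]
          rw [hterm]
          exact Finset.single_le_sum (f := fun i => ((μ k - lam k) i) ^ 2)
            (fun i _ => sq_nonneg _) (Finset.mem_univ i)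
        have h3 : (m k) ^ 2 ≤ ‖μ k - lam k‖ ^ 2 :=
          le_trans (le_trans (hjmin k i) h1) h2
        have hwk := (hw k).le
        simp only [hgdef, if_neg hk0, Set.indicator_of_mem hkP, zero_add]
        nlinarith
      · have : lam k = μ k := hfix k (by simp [hkP, hk0, ← hP])
        simp [hgdef, hk0, Set.indicator_of_notMem hkP, this]
  -- the family of near-optimal transports
  have hconstr : ∀ δ : ℝ, 0 < δ →
      ∃ c ∈ S, c = w k₀ / 2 * ‖μ k₀ - lam0‖ ^ 2 +
        ∑ k, Set.indicator P (fun k => w k / 2 * (m k + δ) ^ 2) k := by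
    intro δ hδ
    set lam : Fin K → EuclideanSpace ℝ (Fin d) := fun k =>
      if k = k₀ then lam0 else if k ∈ P then
        (WithLp.toLp 2 (fun i => if i = j k then min (μ k (j k)) (lam0 (j k)) - δ else μ k i) :
          EuclideanSpace ℝ (Fin d))
      else μ k with hlam
    have hlamP : ∀ k ∈ P, ∀ i, lam k i = if i = j k then min (μ k (j k)) (lam0 (j k)) - δ
        else μ k i := by
      intro k hk i
      have hk0 : k ≠ k₀ := fun h => hk₀ (h ▸ hk)
      simp [hlam, hk0, hk]
    refine ⟨Dw w μ lam, ⟨lam, by simp [hlam], ?_, ?_, rfl⟩, ?_⟩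
    · intro k hk
      simp only [Set.mem_union, Set.mem_singleton_iff, not_or, ← hP] at hk
      simp [hlam, hk.1, hk.2]
    · intro k hk
      intro hdom
      have := hdom (j k)
      rw [hlamP k hk (j k), if_pos rfl] at this
      have : lam0 (j k) ≤ min (μ k (j k)) (lam0 (j k)) - δ := this
      have hmin : min (μ k (j k)) (lam0 (j k)) ≤ lam0 (j k) := min_le_right _ _
      linarith
    · rw [Dw]
      have hk₀term : w k₀ / 2 * ‖μ k₀ - lam k₀‖ ^ 2 = w k₀ / 2 * ‖μ k₀ - lam0‖ ^ 2 := by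
        simp [hlam]
      rw [← Finset.sum_add_sum_compl {k₀}]
      rw [Finset.sum_singleton, hk₀term]
      congr 1
      rw [← Finset.sum_add_sum_compl {k₀}
        (f := fun k => Set.indicator P (fun k => w k / 2 * (m k + δ) ^ 2) k)]
      rw [Finset.sum_singleton, Set.indicator_of_notMem hk₀, zero_add]
      refine Finset.sum_congr rfl fun k hk => ?_
      have hk0 : k ≠ k₀ := by simpa using hk
      by_cases hkP : k ∈ P
      · rw [Set.indicator_of_mem hkP]
        have hnrm : ‖μ k - lam k‖ ^ 2 = (m k + δ) ^ 2 := by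
          rw [euclid_norm_sq]
          have : ∀ i, ((μ k - lam k) i) ^ 2 =
              if i = j k then (m k + δ) ^ 2 else 0 := by
            intro i
            have happ : (μ k - lam k) i = μ k i - lam k i := rfl
            rw [happ, hlamP k hkP i]
            by_cases hij : i = j k
            · subst hij
              rw [if_pos rfl, if_pos rfl]
              congr 1
              have hmk : m k = max 0 (μ k (j k) - lam0 (j k)) := rfl
              rcases le_total (μ k (j k)) (lam0 (j k)) with h | h
              · rw [hmk, max_eq_left (by linarith), min_eq_left h]; ring
              · rw [hmk, max_eq_right (by linarith), min_eq_right h]; ring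
            · rw [if_neg hij, if_neg hij]; simp
          rw [Finset.sum_congr rfl fun i _ => this i]
          simp
        rw [hnrm]
      · rw [Set.indicator_of_notMem hkP]
        have : lam k = μ k := by simp [hlam, hk0, hkP]
        simp [this]
  -- S nonempty and bounded below
  obtain ⟨c1, hc1S, -⟩ := hconstr 1 one_pos
  have hne : S.Nonempty := ⟨c1, hc1S⟩
  have hbdd : BddBelow S := ⟨gcost w μ k₀ lam0, hlb⟩
  refine le_antisymm ?_ (le_csInf hne hlb)
  -- upper bound: for every ε > 0, sInf S ≤ gcost + ε
  refine le_of_forall_pos_le_add ?_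
  intro ε hε
  set C : ℝ := ∑ k, Set.indicator P (fun k => w k / 2 * (2 * m k + 1)) k with hC
  have hC0 : 0 ≤ C := by
    refine Finset.sum_nonneg fun k _ => ?_
    by_cases hk : k ∈ P
    · rw [Set.indicator_of_mem hk]
      have := hw k; have := hm0 k; nlinarith
    · simp [Set.indicator_of_notMem hk]
  set δ : ℝ := min 1 (ε / (C + 1)) with hδdef
  have hδpos : 0 < δ := lt_min one_pos (div_pos hε (by linarith))
  have hδ1 : δ ≤ 1 := min_le_left _ _
  obtain ⟨c, hcS, hcval⟩ := hconstr δ hδpos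
  have hsum : ∑ k, Set.indicator P (fun k => w k / 2 * (m k + δ) ^ 2) k ≤
      (∑ k, Set.indicator P (fun k => w k / 2 * (m k) ^ 2) k) + δ * C := by
    rw [hC, Finset.mul_sum, ← Finset.sum_add_distrib]
    refine Finset.sum_le_sum fun k _ => ?_
    by_cases hk : k ∈ P
    · simp only [Set.indicator_of_mem hk]
      have := hw k; have := hm0 k
      nlinarith [mul_nonneg (mul_nonneg (hw k).le hδpos.le) (sub_nonneg.2 hδ1)]
    · simp [Set.indicator_of_notMem hk]
  have hgc : gcost w μ k₀ lam0 = w k₀ / 2 * ‖μ k₀ - lam0‖ ^ 2 +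
      ∑ k, Set.indicator P (fun k => w k / 2 * (m k) ^ 2) k := by
    unfold gcost
    congr 1
    refine Finset.sum_congr rfl fun k _ => ?_
    by_cases hk : k ∈ P <;> simp [Set.indicator, hk, hiInf k, ← hP]
  have hδC : δ * C ≤ ε := by
    have h1 : δ ≤ ε / (C + 1) := min_le_right _ _
    have h2 : δ * C ≤ (ε / (C + 1)) * C := by
      exact mul_le_mul_of_nonneg_right h1 hC0
    have h3 : (ε / (C + 1)) * C ≤ ε := by
      rw [div_mul_eq_mul_div, div_le_iff₀ (by linarith)]
      nlinarith
    linarith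
  have : c ≤ gcost w μ k₀ lam0 + ε := by
    rw [hcval, hgc]
    have := hsum
    linarith
  exact le_trans (csInf_le hbdd hcS) this
end

section
/- Let G = (V, E) be a finite directed weighted graph with a distinguished vertex 0 ∈ V, containing no negative cycle, and such that every ordered pair of vertices is joined by some directed path; let v(x, y) denote the length of the shortest directed path from x to y in G. For each x ∈ V \ {0}, add a new edge from 0 to x of weight u_x, obtaining the graph G'. Then G' contains a negative cycle if and only if there exists x ∈ V \ {0} with u_x + v(x, 0) < 0. -/
/-- The directed weighted multigraph with edge set `E ⊆ V × V × ℝ` has a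
negative cycle. -/
def HasNegCycle {V : Type*} (E : Set (V × V × ℝ)) : Prop :=
  ∃ (n : ℕ) (i : Fin (n + 1) → V) (v : Fin (n + 1) → ℝ),
    (∀ k, (i k, i (k + 1), v k) ∈ E) ∧ ∑ k, v k < 0

/-- The set of lengths of directed paths from `x` to `y` in the graph with
edge set `E` (a path is a finite sequence of consecutive edges; the empty
path from `x` to `x` has length `0`). -/
def pathLengths {V : Type*} (E : Set (V × V × ℝ)) (x y : V) : Set ℝ :=
  {c | ∃ (n : ℕ) (f : Fin (n + 1) → V) (v : Fin n → ℝ),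
    f 0 = x ∧ f (Fin.last n) = y ∧
    (∀ k : Fin n, (f k.castSucc, f k.succ, v k) ∈ E) ∧ c = ∑ k, v k}

open Finset

section Aux

variable {V : Type*}

def NWalk (E : Set (V × V × ℝ)) (n : ℕ) (f : ℕ → V) (v : ℕ → ℝ) : Prop :=
  ∀ k < n, (f k, f (k + 1), v k) ∈ E

lemma mem_pathLengths_iff {E : Set (V × V × ℝ)} {x y : V} {c : ℝ} :
    c ∈ pathLengths E x y ↔
      ∃ (n : ℕ) (f : ℕ → V) (v : ℕ → ℝ),
        f 0 = x ∧ f n = y ∧ NWalk E n f v ∧ c = ∑ k ∈ range n, v k := by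
  constructor
  · rintro ⟨n, f, v, h0, hl, he, rfl⟩
    refine ⟨n, fun k => if h : k < n + 1 then f ⟨k, h⟩ else y,
      fun k => if h : k < n then v ⟨k, h⟩ else 0, ?_, ?_, ?_, ?_⟩
    · dsimp only
      rw [dif_pos (Nat.succ_pos n)]
      rw [← h0]
      congr 1
    · dsimp only
      rw [dif_pos (Nat.lt_succ_self n)]
      rw [← hl]
      congr 1
    · intro k hk
      dsimp only
      rw [dif_pos hk, dif_pos (Nat.lt_succ_of_lt hk), dif_pos (Nat.succ_lt_succ hk)]
      exact he ⟨k, hk⟩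
    · rw [← Fin.sum_univ_eq_sum_range]
      exact Finset.sum_congr rfl fun i _ => by rw [dif_pos i.isLt]
  · rintro ⟨n, f, v, h0, hn, hw, rfl⟩
    refine ⟨n, fun k => f k.val, fun k => v k.val, h0, hn, ?_, ?_⟩
    · intro k
      exact hw k.val k.isLt
    · rw [← Fin.sum_univ_eq_sum_range]

lemma hasNegCycle_of {E : Set (V × V × ℝ)} {n : ℕ} {F : ℕ → V} {W : ℕ → ℝ}
    (h0 : F (n + 1) = F 0) (he : ∀ k < n + 1, (F k, F (k + 1), W k) ∈ E)
    (hs : ∑ k ∈ range (n + 1), W k < 0) : HasNegCycle E := by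
  refine ⟨n, fun k => F k.val, fun k => W k.val, ?_, ?_⟩
  · intro k
    have hk := he k.val k.isLt
    rcases Nat.lt_or_ge (k.val + 1) (n + 1) with h | h
    · have hv : ((k + 1) : Fin (n + 1)).val = k.val + 1 := by
        rw [Fin.val_add_one_of_lt]
        rw [Fin.lt_iff_val_lt_val, Fin.val_last]
        omega
      dsimp only
      rw [hv]
      exact hk
    · have hkn : k.val = n := by omega
      have hlast : k = Fin.last n := Fin.ext hkn
      have hv : ((k + 1) : Fin (n + 1)) = 0 := by rw [hlast, Fin.last_add_one]
      rw [hv]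
      simp only [Fin.val_zero]
      rw [← h0, hkn]
      rw [hkn] at hk
      exact hk
  · rw [Fin.sum_univ_eq_sum_range (fun k => W k)]
    exact hs

open Fin.NatCast Fin.CommRing in
lemma hasNegCycle_exists_nat {E : Set (V × V × ℝ)} (h : HasNegCycle E) :
    ∃ (n : ℕ) (F : ℕ → V) (W : ℕ → ℝ), F (n + 1) = F 0 ∧
      (∀ k < n + 1, (F k, F (k + 1), W k) ∈ E) ∧ ∑ k ∈ range (n + 1), W k < 0 := by
  obtain ⟨n, i, v, he, hs⟩ := h
  refine ⟨n, fun k => i (k : Fin (n + 1)), fun k => v (k : Fin (n + 1)), ?_, ?_, ?_⟩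
  · dsimp only
    rw [Fin.natCast_self]
    norm_num
  · intro k _
    have := he (k : Fin (n + 1))
    have hc : ((k + 1 : ℕ) : Fin (n + 1)) = (k : Fin (n + 1)) + 1 := by push_cast; ring
    dsimp only
    rw [hc]
    exact this
  · rw [← Fin.sum_univ_eq_sum_range (fun k => v (k : Fin (n + 1)))]
    calc ∑ j : Fin (n+1), v ((j.val : ℕ) : Fin (n+1)) = ∑ j : Fin (n+1), v j := by
          apply Finset.sum_congr rfl
          intro j _
          rw [Fin.cast_val_eq_self]
      _ < 0 := hs

lemma sum_shift (w : ℕ → ℝ) (a b : ℕ) :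
    ∑ k ∈ range (b - a), w (a + k) = ∑ k ∈ Ico a b, w k :=
  (Finset.sum_Ico_eq_sum_range _ _ _).symm

lemma sum_ite_rot (w : ℕ → ℝ) (e t s : ℕ) :
    ∑ k ∈ range (e + t), (if k < e then w (s + k) else w (k - e))
      = ∑ k ∈ Ico s (s + e), w k + ∑ k ∈ range t, w k := by
  rw [range_eq_Ico, ← Finset.sum_Ico_consecutive _ (Nat.zero_le e) (Nat.le_add_right e t)]
  congr 1
  · rw [← range_eq_Ico]
    rw [← sum_shift w s (s + e)]
    have he : s + e - s = e := by omega
    rw [he]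
    exact Finset.sum_congr rfl fun k hk => if_pos (Finset.mem_range.mp hk)
  · rw [Finset.sum_Ico_eq_sum_range]
    have ht : e + t - e = t := by omega
    rw [ht]
    refine Finset.sum_congr rfl fun k _ => ?_
    rw [if_neg (show ¬ e + k < e by omega)]
    congr 1
    omega

lemma sum_ite_cut (v : ℕ → ℝ) (a d n : ℕ) (h1 : a + d ≤ n) :
    ∑ k ∈ range (n - d), (if k < a then v k else v (k + d)) + ∑ k ∈ range d, v (a + k)
      = ∑ k ∈ range n, v k := by
  have ham : a ≤ n - d := by omega
  have e1 : ∑ k ∈ range (n - d), (if k < a then v k else v (k + d))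
      = ∑ k ∈ Ico 0 a, v k + ∑ k ∈ Ico (a + d) n, v k := by
    rw [range_eq_Ico, ← Finset.sum_Ico_consecutive _ (Nat.zero_le a) ham]
    congr 1
    · exact Finset.sum_congr rfl fun k hk => if_pos (Finset.mem_Ico.mp hk).2
    · rw [Finset.sum_Ico_eq_sum_range, Finset.sum_Ico_eq_sum_range]
      have : n - d - a = n - (a + d) := by omega
      rw [this]
      refine Finset.sum_congr rfl fun k _ => ?_
      rw [if_neg (show ¬ a + k < a by omega)]
      congr 1
      omega
  have e2 : ∑ k ∈ range d, v (a + k) = ∑ k ∈ Ico a (a + d), v k := by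
    rw [← sum_shift v a (a + d), Nat.add_sub_cancel_left]
  have e3 : ∑ k ∈ Ico 0 a, v k + ∑ k ∈ Ico a (a + d), v k = ∑ k ∈ Ico 0 (a + d), v k :=
    Finset.sum_Ico_consecutive _ (Nat.zero_le a) (Nat.le_add_right a d)
  have e4 : ∑ k ∈ Ico 0 (a + d), v k + ∑ k ∈ Ico (a + d) n, v k = ∑ k ∈ Ico 0 n, v k :=
    Finset.sum_Ico_consecutive _ (Nat.zero_le _) h1
  simp only [range_eq_Ico] at e1 e2 ⊢
  linarith

lemma walk_lower_bound [Fintype V] {E : Set (V × V × ℝ)} (hE : E.Finite)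
    (hnc : ¬ HasNegCycle E) :
    ∃ B : ℝ, ∀ (n : ℕ) (f : ℕ → V) (v : ℕ → ℝ), NWalk E n f v →
      B ≤ ∑ k ∈ range n, v k := by
  obtain ⟨M, hM⟩ := (hE.image fun e => |e.2.2|).bddAbove
  set M' := max M 0 with hM'
  refine ⟨-((Fintype.card V : ℝ) * M'), ?_⟩
  intro n
  induction n using Nat.strong_induction_on with
  | _ n ih =>
    intro f v hw
    by_cases hn : n ≤ Fintype.card V
    · have h1 : ∀ k ∈ range n, -M' ≤ v k := by
        intro k hk
        have hk' := Finset.mem_range.mp hk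
        have h2 : |v k| ≤ M := hM (Set.mem_image_of_mem _ (hw k hk'))
        have h3 : |v k| ≤ M' := le_trans h2 (le_max_left _ _)
        have h4 := neg_abs_le (v k)
        linarith
      have h5 : ∑ k ∈ range n, (-M') ≤ ∑ k ∈ range n, v k := Finset.sum_le_sum h1
      rw [Finset.sum_const, Finset.card_range, nsmul_eq_mul] at h5
      have h6 : (0:ℝ) ≤ M' := le_max_right _ _
      have h7 : (n : ℝ) ≤ (Fintype.card V : ℝ) := Nat.cast_le.mpr hn
      nlinarith
    · push_neg at hn
      obtain ⟨a, ha, b, hb, hab, hfab⟩ :=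
        Finset.exists_ne_map_eq_of_card_lt_of_maps_to
          (s := Finset.range (n + 1)) (t := Finset.univ) (f := f)
          (by rw [Finset.card_range]; simpa using Nat.lt_succ_of_lt hn)
          (fun i _ => Finset.mem_univ (f i))
      rw [Finset.mem_range] at ha hb
      obtain ⟨a, b, hbn, hlt, hfeq⟩ : ∃ a b, b ≤ n ∧ a < b ∧ f a = f b := by
        rcases hab.lt_or_gt with h | h
        · exact ⟨a, b, by omega, h, hfab⟩
        · exact ⟨b, a, by omega, h, hfab.symm⟩
      set d := b - a with hdd
      have hd1 : 1 ≤ d := by omega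
      have hbad : a + d = b := by omega
      have hdn : d ≤ n := by omega
      -- the cycle cut out has nonnegative weight
      have hC : 0 ≤ ∑ k ∈ range d, v (a + k) := by
        by_contra hC
        push_neg at hC
        apply hnc
        have hd' : d - 1 + 1 = d := by omega
        refine hasNegCycle_of (n := d - 1) (F := fun k => f (a + k)) (W := fun k => v (a + k))
          ?_ ?_ ?_
        · rw [hd', hbad, hfeq.symm]
          norm_num
        · intro k hk
          rw [hd'] at hk
          exact hw (a + k) (by omega)
        · rw [hd']
          exact hC
      -- the shortened walk
      have hwalk : NWalk E (n - d) (fun k => if k < a then f k else f (k + d))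
          (fun k => if k < a then v k else v (k + d)) := by
        intro k hk
        dsimp only
        rcases Nat.lt_trichotomy (k + 1) a with h1 | h1 | h1
        · rw [if_pos (show k < a by omega), if_pos h1, if_pos (show k < a by omega)]
          exact hw k (by omega)
        · rw [if_pos (show k < a by omega), if_neg (show ¬ k + 1 < a by omega),
            if_pos (show k < a by omega)]
          have hfe : f (k + 1 + d) = f (k + 1) := by rw [h1, hbad, hfeq]
          rw [hfe]
          exact hw k (by omega)
        · rw [if_neg (show ¬ k < a by omega), if_neg (show ¬ k + 1 < a by omega),
            if_neg (show ¬ k < a by omega)]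
          have hadd : k + 1 + d = k + d + 1 := by omega
          rw [hadd]
          exact hw (k + d) (by omega)
      have hih := ih (n - d) (by omega) _ _ hwalk
      have hkey := sum_ite_cut v a d n (by omega)
      linarith

lemma key_lemma {E : Set (V × V × ℝ)} (z : V) (u : V → ℝ)
    (hnc : ¬ HasNegCycle E)
    (hbdd : ∀ x : V, BddBelow (pathLengths E x z)) :
    ∀ (m : ℕ) (g : ℕ → V) (w : ℕ → ℝ),
      g (m + 1) = g 0 →
      (∀ k < m + 1, (g k, g (k + 1), w k) ∈ E ∪ {e | ∃ x, x ≠ z ∧ e = (z, x, u x)}) →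
      ∑ k ∈ range (m + 1), w k < 0 →
      ∃ x, x ≠ z ∧ u x + sInf (pathLengths E x z) < 0 := by
  intro m
  induction m using Nat.strong_induction_on with
  | _ m ih =>
    intro g w hg hed hs
    classical
    by_cases hall : ∀ k < m + 1, (g k, g (k + 1), w k) ∈ E
    · exact absurd (hasNegCycle_of hg hall hs) hnc
    · push_neg at hall
      have hP : ∃ k, k < m + 1 ∧ (g k, g (k + 1), w k) ∉ E := by
        obtain ⟨k, h1x, h2x⟩ := hall; exact ⟨k, h1x, h2x⟩
      set k0 := Nat.find hP with hk0def
      obtain ⟨hk0m, hk0E⟩ := Nat.find_spec hP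
      have hk0new : ∃ x, x ≠ z ∧ (g k0, g (k0 + 1), w k0) = (z, x, u x) := by
        rcases hed k0 hk0m with h | h
        · exact absurd h hk0E
        · exact h
      obtain ⟨x, hxz, hxeq⟩ := hk0new
      rw [Prod.ext_iff] at hxeq
      obtain ⟨hgk0, hxeq2⟩ := hxeq
      rw [Prod.ext_iff] at hxeq2
      obtain ⟨hgk01, hwk0⟩ := hxeq2
      simp only at hgk0 hgk01 hwk0
      by_cases h2 : ∃ k2, k2 < m + 1 ∧ k2 ≠ k0 ∧ (g k2, g (k2 + 1), w k2) ∉ E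
      · -- two new edges: split the cycle at the two visits of z
        obtain ⟨k2, hk2m, hk2ne, hk2E⟩ := h2
        have hk0le : k0 ≤ k2 := Nat.find_min' hP ⟨hk2m, hk2E⟩
        have hk0lt : k0 < k2 := lt_of_le_of_ne hk0le (Ne.symm hk2ne)
        have hgk2 : g k2 = z := by
          rcases hed k2 hk2m with h | h
          · exact absurd h hk2E
          · obtain ⟨x2, _, hx2⟩ := h
            exact congrArg Prod.fst hx2
        set d := k2 - k0 with hdd
        set q := m + 1 - k2 with hqq
        have hd1 : 1 ≤ d := by omega
        have hq1 : 1 ≤ q := by omega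
        have hk2d : k0 + d = k2 := by omega
        have hk2q : k2 + q = m + 1 := by omega
        have hsum1 : ∑ k ∈ range d, w (k0 + k) = ∑ k ∈ Ico k0 k2, w k := by
          rw [hdd]; exact sum_shift w k0 k2
        have hsum2 : ∑ k ∈ range (q + k0), (if k < q then w (k2 + k) else w (k - q))
            = ∑ k ∈ Ico k2 (m + 1), w k + ∑ k ∈ Ico 0 k0, w k := by
          rw [sum_ite_rot w q k0 k2, hk2q, range_eq_Ico]
        have hsplit : ∑ k ∈ range d, w (k0 + k)
            + ∑ k ∈ range (q + k0), (if k < q then w (k2 + k) else w (k - q))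
            = ∑ k ∈ range (m + 1), w k := by
          rw [hsum1, hsum2]
          have c1 : ∑ k ∈ Ico 0 k0, w k + ∑ k ∈ Ico k0 k2, w k = ∑ k ∈ Ico 0 k2, w k :=
            Finset.sum_Ico_consecutive _ (Nat.zero_le _) (le_of_lt hk0lt)
          have c2 : ∑ k ∈ Ico 0 k2, w k + ∑ k ∈ Ico k2 (m + 1), w k
              = ∑ k ∈ Ico 0 (m + 1), w k :=
            Finset.sum_Ico_consecutive _ (Nat.zero_le _) (by omega)
          rw [range_eq_Ico]
          linarith
        rcases lt_or_ge (∑ k ∈ range d, w (k0 + k)) 0 with hneg | hpos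
        · -- first piece is a negative cycle
          have hd' : d - 1 + 1 = d := by omega
          refine ih (d - 1) (by omega) (fun k => g (k0 + k)) (fun k => w (k0 + k)) ?_ ?_ ?_
          · rw [hd', hk2d, hgk2, Nat.add_zero, hgk0]
          · intro k hk
            rw [hd'] at hk
            exact hed (k0 + k) (by omega)
          · rw [hd']
            exact hneg
        · -- second piece is a negative cycle
          have hq' : q + k0 - 1 + 1 = q + k0 := by omega
          have hneg2 : ∑ k ∈ range (q + k0), (if k < q then w (k2 + k) else w (k - q)) < 0 := by
            linarith
          refine ih (q + k0 - 1) (by omega)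
            (fun k => if k < q then g (k2 + k) else g (k - q))
            (fun k => if k < q then w (k2 + k) else w (k - q)) ?_ ?_ ?_
          · rw [hq']
            rw [if_neg (show ¬ q + k0 < q by omega), if_pos (show (0:ℕ) < q by omega)]
            rw [show q + k0 - q = k0 by omega, Nat.add_zero, hgk0, hgk2]
          · intro k hk
            rw [hq'] at hk
            rcases Nat.lt_trichotomy (k + 1) q with h1 | h1 | h1
            · rw [if_pos (show k < q by omega), if_pos h1, if_pos (show k < q by omega)]
              exact hed (k2 + k) (by omega)
            · rw [if_pos (show k < q by omega), if_neg (show ¬ k + 1 < q by omega),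
                if_pos (show k < q by omega)]
              have hz0 : g (k + 1 - q) = g (k2 + k + 1) := by
                rw [show k + 1 - q = 0 by omega, ← hg]
                congr 1
                omega
              rw [hz0]
              exact hed (k2 + k) (by omega)
            · rw [if_neg (show ¬ k < q by omega), if_neg (show ¬ k + 1 < q by omega),
                if_neg (show ¬ k < q by omega)]
              rw [show k + 1 - q = k - q + 1 by omega]
              exact hed (k - q) (by omega)
          · rw [hq']
            exact hneg2
      · -- exactly one new edge: rotate the cycle and extract a path from x to z
        push_neg at h2
        have hone : ∀ k, k < m + 1 → k ≠ k0 → (g k, g (k + 1), w k) ∈ E := by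
          intro k hk hkne
          exact h2 k hk hkne
        set q := m + 1 - k0 with hqq
        have hq1 : 1 ≤ q := by omega
        have hqk0 : q + k0 = m + 1 := by omega
        set g' : ℕ → V := fun k => if k < q then g (k0 + k) else g (k - q) with hg'
        set w' : ℕ → ℝ := fun k => if k < q then w (k0 + k) else w (k - q) with hw'
        have hrot : ∀ j, 1 ≤ j → j < m + 1 → (g' j, g' (j + 1), w' j) ∈ E := by
          intro j hj1 hjm
          rw [hg', hw']
          dsimp only
          rcases Nat.lt_trichotomy (j + 1) q with h1 | h1 | h1
          · rw [if_pos (show j < q by omega), if_pos h1, if_pos (show j < q by omega)]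
            exact hone (k0 + j) (by omega) (by omega)
          · rw [if_pos (show j < q by omega), if_neg (show ¬ j + 1 < q by omega),
              if_pos (show j < q by omega)]
            have hz0 : g (j + 1 - q) = g (k0 + j + 1) := by
              rw [show j + 1 - q = 0 by omega, ← hg]
              congr 1
              omega
            rw [hz0]
            exact hone (k0 + j) (by omega) (by omega)
          · rw [if_neg (show ¬ j < q by omega), if_neg (show ¬ j + 1 < q by omega),
              if_neg (show ¬ j < q by omega)]
            rw [show j + 1 - q = j - q + 1 by omega]
            exact hone (j - q) (by omega) (by omega)
        have hwalk : NWalk E m (fun k => g' (k + 1)) (fun k => w' (k + 1)) := by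
          intro k hk
          exact hrot (k + 1) (by omega) (by omega)
        have hf0 : g' 1 = x := by
          rw [hg']
          dsimp only
          by_cases h1 : 1 < q
          · rw [if_pos h1]
            exact hgk01
          · rw [if_neg h1, show 1 - q = 0 by omega, ← hg, ← hgk01]
            congr 1
            omega
        have hfm : g' (m + 1) = z := by
          rw [hg']
          dsimp only
          rw [if_neg (show ¬ m + 1 < q by omega), show m + 1 - q = k0 by omega]
          exact hgk0
        have hmem : (∑ k ∈ range m, w' (k + 1)) ∈ pathLengths E x z :=
          mem_pathLengths_iff.mpr ⟨m, fun k => g' (k + 1), fun k => w' (k + 1), hf0, hfm, hwalk, rfl⟩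
        have hsumrot : ∑ k ∈ range (m + 1), w' k = ∑ k ∈ range (m + 1), w k := by
          rw [hw']
          have h := sum_ite_rot w q k0 k0
          rw [hqk0] at h
          rw [h]
          have c1 : ∑ k ∈ Ico 0 k0, w k + ∑ k ∈ Ico k0 (k0 + q), w k
              = ∑ k ∈ Ico 0 (k0 + q), w k :=
            Finset.sum_Ico_consecutive _ (Nat.zero_le _) (Nat.le_add_right _ _)
          simp only [range_eq_Ico, show k0 + q = m + 1 by omega] at c1 ⊢
          linarith
        have hsum0 : ∑ k ∈ range (m + 1), w' k = ∑ k ∈ range m, w' (k + 1) + w' 0 :=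
          Finset.sum_range_succ' w' m
        have hw'0 : w' 0 = u x := by
          rw [hw']
          dsimp only
          rw [if_pos (show (0:ℕ) < q by omega), Nat.add_zero]
          exact hwk0
        refine ⟨x, hxz, ?_⟩
        have hle : sInf (pathLengths E x z) ≤ ∑ k ∈ range m, w' (k + 1) :=
          csInf_le (hbdd x) hmem
        linarith

end Aux

/-- Adding edges `0 → x` of weight `u_x` to a graph without negative cycles in
which all pairs of vertices are joined by paths creates a negative cycle iff
`u_x + v(x, 0) < 0` for some `x ≠ 0`, where `v` denotes shortest-path length
in the original graph. -/
theorem neg_cycle_after_adding_source_edges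
    {V : Type*} [Fintype V] (E : Set (V × V × ℝ)) (hE : E.Finite)
    (z : V) (hnc : ¬ HasNegCycle E)
    (hconn : ∀ x y : V, (pathLengths E x y).Nonempty)
    (u : V → ℝ) :
    HasNegCycle (E ∪ {e | ∃ x, x ≠ z ∧ e = (z, x, u x)}) ↔
      ∃ x, x ≠ z ∧ u x + sInf (pathLengths E x z) < 0 := by
  obtain ⟨B, hB⟩ := walk_lower_bound hE hnc
  have hbdd : ∀ x : V, BddBelow (pathLengths E x z) := by
    intro x
    refine ⟨B, fun c hc => ?_⟩
    obtain ⟨n, f, v, h0, hn, hw, rfl⟩ := mem_pathLengths_iff.mp hc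
    exact hB n f v hw
  constructor
  · intro h
    obtain ⟨m, g, w, hg, he, hs⟩ := hasNegCycle_exists_nat h
    exact key_lemma z u hnc hbdd m g w hg he hs
  · rintro ⟨x, hxz, hx⟩
    have hne := hconn x z
    have hlt : sInf (pathLengths E x z) < -u x := by linarith
    obtain ⟨c, hc, hclt⟩ := exists_lt_of_csInf_lt hne hlt
    obtain ⟨n, f, v, h0, hn, hw, rfl⟩ := mem_pathLengths_iff.mp hc
    refine hasNegCycle_of (n := n) (F := fun k => if k = 0 then z else f (k - 1))
      (W := fun k => if k = 0 then u x else v (k - 1)) ?_ ?_ ?_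
    · rw [if_neg (Nat.succ_ne_zero n), if_pos rfl, Nat.add_sub_cancel, hn]
    · intro k hk
      rcases Nat.eq_zero_or_pos k with rfl | hkpos
      · rw [if_pos rfl, if_neg (Nat.one_ne_zero), if_pos rfl]
        right
        refine ⟨x, hxz, ?_⟩
        rw [show (1:ℕ) - 1 = 0 by rfl, h0]
      · rw [if_neg (by omega), if_neg (by omega), if_neg (by omega)]
        left
        rw [show k + 1 - 1 = k - 1 + 1 by omega]
        exact hw (k - 1) (by omega)
    · rw [Finset.sum_range_succ' (fun k => if k = 0 then u x else v (k - 1)) n]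
      simp only [Nat.succ_ne_zero, Nat.add_sub_cancel, ite_false, ite_true, if_false, if_true,
        reduceIte]
      linarith
end

section
/- Let w₀ > 0, μ₀ ∈ ℝ, p a natural number, w₁, …, w_p > 0, and x₁ ≤ x₂ ≤ ⋯ ≤ x_p real numbers; set x₀ = −∞ and x_{p+1} = +∞. Define h(λ) = (w₀/2)(μ₀ − λ)² + Σ_{i=1}^{p} (w_i/2)(max{0, x_i − λ})² for λ ∈ ℝ. Then h is strictly convex, has a unique minimizer λ*, and there exists k ∈ {0, 1, …, p} such that λ* = (w₀ μ₀ + Σ_{i=k+1}^{p} w_i x_i) / (w₀ + Σ_{i=k+1}^{p} w_i) and x_k ≤ λ* ≤ x_{k+1}. -/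
/-- Auxiliary numerator. -/
noncomputable def Anum (w₀ μ₀ : ℝ) {p : ℕ} (w x : Fin p → ℝ) (k : ℕ) : ℝ :=
  w₀ * μ₀ + ∑ i ∈ Finset.univ.filter (fun i : Fin p => k ≤ i.val), w i * x i

/-- Auxiliary denominator. -/
noncomputable def Bden (w₀ : ℝ) {p : ℕ} (w : Fin p → ℝ) (k : ℕ) : ℝ :=
  w₀ + ∑ i ∈ Finset.univ.filter (fun i : Fin p => k ≤ i.val), w i

lemma posPart_sq_convex (x a b t s : ℝ) (ht : 0 ≤ t) (hs : 0 ≤ s) (hts : t + s = 1) :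
    (max 0 (x - (t * a + s * b))) ^ 2
      ≤ t * (max 0 (x - a)) ^ 2 + s * (max 0 (x - b)) ^ 2 := by
  set u := max 0 (x - a) with hu'
  set v := max 0 (x - b) with hv'
  set c := max 0 (x - (t * a + s * b)) with hc'
  have hu0 : 0 ≤ u := le_max_left _ _
  have hv0 : 0 ≤ v := le_max_left _ _
  have hc0 : 0 ≤ c := le_max_left _ _
  have hu : x - a ≤ u := le_max_right _ _
  have hv : x - b ≤ v := le_max_right _ _
  have hc : c ≤ t * u + s * v := by
    apply max_le (by positivity)
    calc x - (t * a + s * b) = t * (x - a) + s * (x - b) := by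
          linear_combination (-x) * hts
      _ ≤ t * u + s * v :=
          add_le_add (mul_le_mul_of_nonneg_left hu ht) (mul_le_mul_of_nonneg_left hv hs)
  nlinarith [mul_self_le_mul_self hc0 hc, mul_nonneg (mul_nonneg ht hs) (sq_nonneg (u - v))]

lemma posPart_sq_grad (x lam mu : ℝ) :
    (max 0 (x - mu)) ^ 2 + 2 * max 0 (x - mu) * (mu - lam) ≤ (max 0 (x - lam)) ^ 2 := by
  set a := max 0 (x - lam) with ha'
  set b := max 0 (x - mu) with hb'
  have ha0 : 0 ≤ a := le_max_left _ _
  have ha : x - lam ≤ a := le_max_right _ _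
  have hb0 : 0 ≤ b := le_max_left _ _
  rcases le_or_gt (x - mu) 0 with hle | hlt
  · have hb : b = 0 := max_eq_left hle
    rw [hb]; nlinarith
  · have hb : b = x - mu := max_eq_right hlt.le
    rcases le_or_gt (x - lam) 0 with h2 | h2
    · nlinarith
    · have ha2 : a = x - lam := max_eq_right h2.le
      nlinarith [sq_nonneg (a - b)]

/-- Per-coordinate optimization: the function
`h(λ) = (w₀/2)(μ₀ − λ)² + Σᵢ (wᵢ/2)(max{0, xᵢ − λ})²` (with `x₁ ≤ ⋯ ≤ x_p`,
here zero-indexed by `Fin p`) is strictly convex, has a unique minimizer `λ*`,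
and there is `k ∈ {0, …, p}` for which `λ*` has the stated closed form and
`x_k ≤ λ* ≤ x_{k+1}` (with the conventions `x₀ = −∞`, `x_{p+1} = +∞`). -/
theorem per_coordinate_minimizer (w₀ : ℝ) (hw₀ : 0 < w₀) (μ₀ : ℝ) (p : ℕ)
    (w x : Fin p → ℝ) (hw : ∀ i, 0 < w i) (hx : Monotone x) (h : ℝ → ℝ)
    (hdef : ∀ lam, h lam
      = w₀ / 2 * (μ₀ - lam) ^ 2 + ∑ i, w i / 2 * (max 0 (x i - lam)) ^ 2) :
    StrictConvexOn ℝ Set.univ h ∧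
    ∃ lamStar : ℝ,
      (∀ lam, h lamStar ≤ h lam) ∧
      (∀ lam, (∀ y, h lam ≤ h y) → lam = lamStar) ∧
      ∃ k : ℕ, ∃ hkp : k ≤ p,
        lamStar =
          (w₀ * μ₀ + ∑ i ∈ Finset.univ.filter (fun i : Fin p => k ≤ i.val), w i * x i)
            / (w₀ + ∑ i ∈ Finset.univ.filter (fun i : Fin p => k ≤ i.val), w i) ∧
        (∀ hk : 0 < k, x ⟨k - 1, by omega⟩ ≤ lamStar) ∧
        (∀ hk : k < p, lamStar ≤ x ⟨k, hk⟩) := by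
  classical
  -- Strict convexity
  have hconv : StrictConvexOn ℝ Set.univ h := by
    refine ⟨convex_univ, fun a _ b _ hab t s ht hs hts => ?_⟩
    simp only [smul_eq_mul]
    rw [hdef, hdef, hdef]
    have hq : w₀ / 2 * (μ₀ - (t * a + s * b)) ^ 2
        < t * (w₀ / 2 * (μ₀ - a) ^ 2) + s * (w₀ / 2 * (μ₀ - b) ^ 2) := by
      have hab2 : (0:ℝ) < (a - b) ^ 2 := by
        have : a - b ≠ 0 := sub_ne_zero.mpr hab
        positivity
      have hs1 : s = 1 - t := by linarith
      subst hs1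
      nlinarith [mul_pos (mul_pos ht hs) hab2]
    have hsum : ∑ i, w i / 2 * (max 0 (x i - (t * a + s * b))) ^ 2
        ≤ t * ∑ i, w i / 2 * (max 0 (x i - a)) ^ 2
          + s * ∑ i, w i / 2 * (max 0 (x i - b)) ^ 2 := by
      rw [Finset.mul_sum, Finset.mul_sum, ← Finset.sum_add_distrib]
      refine Finset.sum_le_sum fun i _ => ?_
      have := posPart_sq_convex (x i) a b t s ht.le hs.le hts
      nlinarith [(hw i).le]
    linarith [hq, hsum]
  refine ⟨hconv, ?_⟩
  -- Choice of k
  have hBpos : ∀ k, 0 < Bden w₀ w k := by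
    intro k
    have : (0:ℝ) ≤ ∑ i ∈ Finset.univ.filter (fun i : Fin p => k ≤ i.val), w i :=
      Finset.sum_nonneg fun i _ => (hw i).le
    unfold Bden; linarith
  have hrecA : ∀ k (hk : k < p),
      Anum w₀ μ₀ w x k = w ⟨k, hk⟩ * x ⟨k, hk⟩ + Anum w₀ μ₀ w x (k + 1) := by
    intro k hk
    have hset : Finset.univ.filter (fun i : Fin p => k ≤ i.val)
        = insert ⟨k, hk⟩ (Finset.univ.filter (fun i : Fin p => k + 1 ≤ i.val)) := by
      ext i
      simp only [Finset.mem_filter, Finset.mem_univ, true_and, Finset.mem_insert, Fin.ext_iff]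
      omega
    unfold Anum
    rw [hset, Finset.sum_insert (by simp)]
    ring
  have hrecB : ∀ k (hk : k < p),
      Bden w₀ w k = w ⟨k, hk⟩ + Bden w₀ w (k + 1) := by
    intro k hk
    have hset : Finset.univ.filter (fun i : Fin p => k ≤ i.val)
        = insert ⟨k, hk⟩ (Finset.univ.filter (fun i : Fin p => k + 1 ≤ i.val)) := by
      ext i
      simp only [Finset.mem_filter, Finset.mem_univ, true_and, Finset.mem_insert, Fin.ext_iff]
      omega
    unfold Bden
    rw [hset, Finset.sum_insert (by simp)]
    ring
  have hex : ∃ k, k = p ∨ ∃ hk : k < p, Anum w₀ μ₀ w x k ≤ x ⟨k, hk⟩ * Bden w₀ w k :=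
    ⟨p, Or.inl rfl⟩
  set k := Nat.find hex with hkdef
  have hPk := Nat.find_spec hex
  have hkp : k ≤ p := Nat.find_le (Or.inl rfl)
  set lamStar := Anum w₀ μ₀ w x k / Bden w₀ w k with hlsdef
  have hAB : lamStar * Bden w₀ w k = Anum w₀ μ₀ w x k :=
    div_mul_cancel₀ _ (hBpos k).ne'
  -- upper bound
  have hub : ∀ hk : k < p, lamStar ≤ x ⟨k, hk⟩ := by
    intro hklt
    rcases hPk with hkeq | ⟨hk2, hle⟩
    · omega
    · rw [hlsdef, div_le_iff₀ (hBpos k)]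
      exact hle
  -- lower bound
  have hlb : ∀ hk : 0 < k, x ⟨k - 1, by omega⟩ ≤ lamStar := by
    intro hkpos
    have hkm : k - 1 < p := by omega
    have hnP := Nat.find_min hex (m := k - 1) (by omega)
    have hgt' : x ⟨k - 1, hkm⟩ * Bden w₀ w (k - 1) < Anum w₀ μ₀ w x (k - 1) := by
      by_contra hcon
      exact hnP (Or.inr ⟨hkm, not_lt.mp hcon⟩)
    have hA := hrecA (k - 1) hkm
    have hB := hrecB (k - 1) hkm
    have hk1 : k - 1 + 1 = k := by omega
    rw [hk1] at hA hB
    have hwpos := hw ⟨k - 1, hkm⟩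
    rw [hA, hB] at hgt'
    have hxB : x ⟨k - 1, hkm⟩ * Bden w₀ w k < Anum w₀ μ₀ w x k := by
      nlinarith [hgt']
    rw [hlsdef, le_div_iff₀ (hBpos k)]
    exact hxB.le
  -- stationarity
  have hstat : w₀ * (lamStar - μ₀) = ∑ i, w i * max 0 (x i - lamStar) := by
    have hsplit : ∑ i, w i * max 0 (x i - lamStar)
        = ∑ i ∈ Finset.univ.filter (fun i : Fin p => k ≤ i.val), w i * (x i - lamStar) := by
      rw [← Finset.sum_filter_add_sum_filter_not Finset.univ (fun i : Fin p => k ≤ i.val)]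
      have h2 : ∑ i ∈ Finset.univ.filter (fun i : Fin p => ¬ k ≤ i.val),
          w i * max 0 (x i - lamStar) = 0 := by
        refine Finset.sum_eq_zero fun i hi => ?_
        simp only [Finset.mem_filter, Finset.mem_univ, true_and, not_le] at hi
        have hkpos : 0 < k := by omega
        have hxi : x i ≤ x ⟨k - 1, by omega⟩ := hx (by simp [Fin.le_def]; omega)
        have : x i ≤ lamStar := le_trans hxi (hlb hkpos)
        rw [max_eq_left (by linarith), mul_zero]
      have h1 : ∑ i ∈ Finset.univ.filter (fun i : Fin p => k ≤ i.val),
          w i * max 0 (x i - lamStar)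
          = ∑ i ∈ Finset.univ.filter (fun i : Fin p => k ≤ i.val),
            w i * (x i - lamStar) := by
        refine Finset.sum_congr rfl fun i hi => ?_
        simp only [Finset.mem_filter, Finset.mem_univ, true_and] at hi
        have hklt : k < p := lt_of_le_of_lt hi i.isLt
        have hxi : x ⟨k, hklt⟩ ≤ x i := hx (by simp [Fin.le_def]; omega)
        have : lamStar ≤ x i := le_trans (hub hklt) hxi
        rw [max_eq_right (by linarith)]
      rw [h1, h2, add_zero]
    rw [hsplit]
    have hexp : ∑ i ∈ Finset.univ.filter (fun i : Fin p => k ≤ i.val), w i * (x i - lamStar)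
        = (Anum w₀ μ₀ w x k - w₀ * μ₀) - (Bden w₀ w k - w₀) * lamStar := by
      simp only [mul_sub]
      rw [Finset.sum_sub_distrib, ← Finset.sum_mul]
      unfold Anum Bden
      ring
    rw [hexp]
    nlinarith [hAB]
  -- key inequality
  have key : ∀ lam, h lamStar + w₀ / 2 * (lam - lamStar) ^ 2 ≤ h lam := by
    intro lam
    rw [hdef, hdef]
    have hterms : ∀ i ∈ Finset.univ,
        w i / 2 * (max 0 (x i - lamStar)) ^ 2
          + w i * max 0 (x i - lamStar) * (lamStar - lam)
        ≤ w i / 2 * (max 0 (x i - lam)) ^ 2 := by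
      intro i _
      have := posPart_sq_grad (x i) lam lamStar
      nlinarith [(hw i).le]
    have h1 := Finset.sum_le_sum hterms
    rw [Finset.sum_add_distrib] at h1
    have h2 : ∑ i, w i * max 0 (x i - lamStar) * (lamStar - lam)
        = (w₀ * (lamStar - μ₀)) * (lamStar - lam) := by
      rw [hstat, Finset.sum_mul]
    rw [h2] at h1
    nlinarith [h1]
  refine ⟨lamStar, ?_, ?_, k, hkp, rfl, hlb, hub⟩
  · intro lam
    have := key lam
    nlinarith [mul_nonneg hw₀.le (sq_nonneg (lam - lamStar))]
  · intro lam hmin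
    have h1 := key lam
    have h2 := hmin lamStar
    have h3 : (lam - lamStar) ^ 2 = 0 := by nlinarith [sq_nonneg (lam - lamStar)]
    have := sq_eq_zero_iff.mp h3
    linarith [sub_eq_zero.mp this]
end

section
/- Let w_{k₀}, w_{k₁}, w_{k₂} > 0 and let μ_{k₀}, μ_{k₁}, μ_{k₂} ∈ ℝ² satisfy μ_{k₀}¹ ≥ μ_{k₁}¹ ≥ μ_{k₂}¹ and μ_{k₀}² ≤ μ_{k₁}² ≤ μ_{k₂}². For indices a, b define c(a, b) = (1/2)·(w_a w_b/(w_a + w_b))·Σ_{j=1}^{2} (max{0, μ_a^j − μ_b^j})². Then c(k₀, k₂) ≥ min( c(k₀, k₁), c(k₁, k₂) ). -/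
/-- In dimension 2, with `μ_{k₁}` between `μ_{k₀}` and `μ_{k₂}` along the
Pareto front, the cost `c(k₀, k₂)` of shadowing `k₀` by `k₂` is at least the
minimum of the costs `c(k₀, k₁)` and `c(k₁, k₂)`, where
`c(a, b) = (1/2)·(w_a w_b/(w_a + w_b))·Σ_j (max{0, μ_a^j − μ_b^j})²`. -/
theorem adjacent_pairs_suffice (w₀ w₁ w₂ : ℝ) (hw₀ : 0 < w₀) (hw₁ : 0 < w₁)
    (hw₂ : 0 < w₂) (μ₀ μ₁ μ₂ : Fin 2 → ℝ)
    (h1 : μ₁ 0 ≤ μ₀ 0) (h2 : μ₂ 0 ≤ μ₁ 0)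
    (h3 : μ₀ 1 ≤ μ₁ 1) (h4 : μ₁ 1 ≤ μ₂ 1) :
    min (1 / 2 * (w₀ * w₁ / (w₀ + w₁)) * ∑ j, (max 0 (μ₀ j - μ₁ j)) ^ 2)
        (1 / 2 * (w₁ * w₂ / (w₁ + w₂)) * ∑ j, (max 0 (μ₁ j - μ₂ j)) ^ 2)
      ≤ 1 / 2 * (w₀ * w₂ / (w₀ + w₂)) * ∑ j, (max 0 (μ₀ j - μ₂ j)) ^ 2 := by
  have e01 : max 0 (μ₀ 1 - μ₁ 1) = 0 := max_eq_left (by linarith)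
  have e11 : max 0 (μ₁ 1 - μ₂ 1) = 0 := max_eq_left (by linarith)
  have e21 : max 0 (μ₀ 1 - μ₂ 1) = 0 := max_eq_left (by linarith)
  have f0 : max 0 (μ₀ 0 - μ₁ 0) = μ₀ 0 - μ₁ 0 := max_eq_right (by linarith)
  have f1 : max 0 (μ₁ 0 - μ₂ 0) = μ₁ 0 - μ₂ 0 := max_eq_right (by linarith)
  have f2 : max 0 (μ₀ 0 - μ₂ 0) = μ₀ 0 - μ₂ 0 := max_eq_right (by linarith)
  simp only [Fin.sum_univ_two, e01, e11, e21, f0, f1, f2]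
  set s := μ₀ 0 - μ₁ 0 with hs
  set t := μ₁ 0 - μ₂ 0 with ht
  have hs0 : 0 ≤ s := by simp [hs]; linarith
  have ht0 : 0 ≤ t := by simp [ht]; linarith
  have hst : μ₀ 0 - μ₂ 0 = s + t := by simp [hs, ht]
  rw [hst]
  have h01 : 0 < w₀ + w₁ := by linarith
  have h12 : 0 < w₁ + w₂ := by linarith
  have h02 : 0 < w₀ + w₂ := by linarith
  rcases le_total (w₀ * s ^ 2) (w₂ * t ^ 2) with hc | hc
  · apply min_le_of_left_le
    simp only [one_mul, div_mul_eq_mul_div, div_div]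
    rw [div_le_div_iff₀ (by positivity) (by positivity)]
    have key : w₀ * s ^ 2 * (w₀ + w₂) ≤ w₀ * w₂ * (s + t) ^ 2 := by
      nlinarith [mul_le_mul_of_nonneg_left hc hw₀.le,
        mul_nonneg (mul_nonneg hw₀.le hw₂.le) (mul_nonneg hs0 ht0)]
    have knn : 0 ≤ w₀ * s ^ 2 * (w₀ + w₂) := by positivity
    nlinarith [mul_le_mul_of_nonneg_left key h01.le,
      mul_le_mul_of_nonneg_right (show w₁ ≤ w₀ + w₁ by linarith) knn]
  · apply min_le_of_right_le
    simp only [one_mul, div_mul_eq_mul_div, div_div]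
    rw [div_le_div_iff₀ (by positivity) (by positivity)]
    have key : w₂ * t ^ 2 * (w₀ + w₂) ≤ w₀ * w₂ * (s + t) ^ 2 := by
      nlinarith [mul_le_mul_of_nonneg_left hc hw₂.le,
        mul_nonneg (mul_nonneg hw₀.le hw₂.le) (mul_nonneg hs0 ht0)]
    have knn : 0 ≤ w₂ * t ^ 2 * (w₀ + w₂) := by positivity
    nlinarith [mul_le_mul_of_nonneg_left key h12.le,
      mul_le_mul_of_nonneg_right (show w₁ ≤ w₁ + w₂ by linarith) knn]
end
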